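/- (Petersen's lemma, static form) Let C ∈ ℝ^{n×n} be symmetric, and let B ∈ ℝ^{n×p}, A ∈ ℝ^{q×n} be nonzero. Then C + B Δ A + Aᵀ Δᵀ Bᵀ ⪯ 0 for all Δ ∈ ℝ^{p×q} with Δᵀ Δ ⪯ I if and only if there exists ε > 0 such that C + ε B Bᵀ + ε⁻¹ Aᵀ A ⪯ 0. -/

import Mathlib

/-
The easy direction is `2 u ⬝ w ≤ ε ‖u‖² + ε⁻¹ ‖w‖²` for `u = Bᵀ x`, `w = Δ A x`. Conversely, a
contraction `Δ` can send `A x` to any vector of at most its length, so the hypothesis says that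
`x ⬝ (C + t S + t⁻¹ T) x ≤ 0` (with `S = B Bᵀ`, `T = Aᵀ A`) at least for the vectors `x` with
`x ⬝ T x = t² x ⬝ S x`. Let `φ ε` be the largest eigenvalue of `C + ε S + ε⁻¹ T`. It tends to `+∞`
at both ends of `(0, ∞)`, so it has a minimum at some `e`; suppose `φ e > 0`. Limits of top
eigenvectors for `ε ↓ e` and `ε ↑ e` give top eigenvectors `x₂`, `x₁` of the matrix at `e` on
either side of the cone `x ⬝ T x = e² x ⬝ S x`. This cone meets their span in some `w ≠ 0`, and
`w ⬝ (C + e S + e⁻¹ T) w = φ e ‖w‖² > 0` contradicts the hypothesis.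
-/

open Matrix Filter Topology

namespace Matrix

section DotProduct

variable {m k l : Type*} [Fintype m] [Fintype k] [Fintype l]

lemma dotProduct_self_nonneg (x : m → ℝ) : 0 ≤ x ⬝ᵥ x := by
  simpa using dotProduct_star_self_nonneg x

lemma dotProduct_self_pos {x : m → ℝ} (hx : x ≠ 0) : 0 < x ⬝ᵥ x := by
  simpa using dotProduct_self_star_pos_iff.mpr hx

lemma dotProduct_sq_le (v z : l → ℝ) : (v ⬝ᵥ z) ^ 2 ≤ (v ⬝ᵥ v) * (z ⬝ᵥ z) := by
  simpa [dotProduct, sq] using Finset.sum_mul_sq_le_sq_mul_sq Finset.univ v z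

lemma two_mul_dotProduct_le (u w : k → ℝ) {ε : ℝ} (hε : 0 < ε) :
    2 * (u ⬝ᵥ w) ≤ ε * (u ⬝ᵥ u) + ε⁻¹ * (w ⬝ᵥ w) := by
  have h := dotProduct_self_nonneg (ε • u - w)
  simp only [sub_dotProduct, dotProduct_sub, smul_dotProduct, dotProduct_smul, smul_eq_mul,
    dotProduct_comm w u] at h
  refine le_of_mul_le_mul_left ?_ hε
  rw [mul_add, ← mul_assoc ε ε⁻¹, mul_inv_cancel₀ hε.ne', one_mul]
  linarith

lemma dotProduct_mul_mulVec (x : m → ℝ) (P : Matrix m k ℝ) (Q : Matrix k l ℝ) (y : l → ℝ) :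
    x ⬝ᵥ (P * Q) *ᵥ y = Pᵀ *ᵥ x ⬝ᵥ Q *ᵥ y := by
  rw [← mulVec_mulVec, dotProduct_mulVec, mulVec_transpose]

lemma posSemidef_of_isSymm {M : Matrix m m ℝ} (hM : M.IsSymm) (h : ∀ x, 0 ≤ x ⬝ᵥ M *ᵥ x) :
    M.PosSemidef :=
  .of_dotProduct_mulVec_nonneg (isHermitian_iff_isSymm.mpr hM) (by simpa using h)

lemma posSemidef_one_sub_transpose_mul_self_iff [DecidableEq l] (Δ : Matrix k l ℝ) :
    (1 - Δᵀ * Δ).PosSemidef ↔ ∀ z, Δ *ᵥ z ⬝ᵥ Δ *ᵥ z ≤ z ⬝ᵥ z := by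
  have hq (z : l → ℝ) : z ⬝ᵥ (1 - Δᵀ * Δ) *ᵥ z = z ⬝ᵥ z - Δ *ᵥ z ⬝ᵥ Δ *ᵥ z := by
    rw [sub_mulVec, one_mulVec, dotProduct_sub, dotProduct_mul_mulVec, transpose_transpose]
  refine ⟨fun h z => ?_, fun h => posSemidef_of_isSymm
    (isSymm_one.sub (by simp [IsSymm, transpose_mul])) fun z => by linarith [hq z, h z]⟩
  have := h.dotProduct_mulVec_nonneg z
  rw [star_trivial, hq] at this
  linarith

lemma exists_contraction_mulVec_eq [DecidableEq l] {u : k → ℝ} {v : l → ℝ}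
    (h : u ⬝ᵥ u ≤ v ⬝ᵥ v) : ∃ Δ : Matrix k l ℝ, (1 - Δᵀ * Δ).PosSemidef ∧ Δ *ᵥ v = u := by
  rcases eq_or_ne v 0 with rfl | hv
  · have hu : u = 0 := dotProduct_self_eq_zero.mp (le_antisymm (by simpa using h)
      (dotProduct_self_nonneg u))
    refine ⟨0, by simpa using PosSemidef.one, by simp [hu]⟩
  have hvv := dotProduct_self_pos hv
  have hΔ (z : l → ℝ) : ((v ⬝ᵥ v)⁻¹ • vecMulVec u v) *ᵥ z = ((v ⬝ᵥ v)⁻¹ * (v ⬝ᵥ z)) • u := by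
    rw [smul_mulVec, vecMulVec_mulVec, op_smul_eq_smul, smul_smul]
  refine ⟨(v ⬝ᵥ v)⁻¹ • vecMulVec u v, (posSemidef_one_sub_transpose_mul_self_iff _).mpr
    fun z => ?_, by rw [hΔ, inv_mul_cancel₀ hvv.ne', one_smul]⟩
  rw [hΔ, smul_dotProduct, dotProduct_smul, smul_eq_mul, smul_eq_mul, ← mul_assoc, ← sq]
  calc ((v ⬝ᵥ v)⁻¹ * (v ⬝ᵥ z)) ^ 2 * (u ⬝ᵥ u)
      ≤ ((v ⬝ᵥ v)⁻¹) ^ 2 * ((v ⬝ᵥ v) * (z ⬝ᵥ z)) * (v ⬝ᵥ v) := by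
        rw [mul_pow]
        exact mul_le_mul (mul_le_mul_of_nonneg_left (dotProduct_sq_le v z) (sq_nonneg _)) h
          (dotProduct_self_nonneg u)
          (mul_nonneg (sq_nonneg _) (mul_nonneg hvv.le (dotProduct_self_nonneg z)))
    _ = z ⬝ᵥ z := by field_simp

lemma exists_ne_zero_dotProduct_mulVec_eq_zero (G : Matrix m m ℝ) {x y : m → ℝ} (hx : x ≠ 0)
    (hy : y ≠ 0) (hGx : x ⬝ᵥ G *ᵥ x ≤ 0) (hGy : 0 ≤ y ⬝ᵥ G *ᵥ y) :
    ∃ w ∈ Submodule.span ℝ {x, y}, w ≠ 0 ∧ w ⬝ᵥ G *ᵥ w = 0 := by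
  -- replacing `y` by `-y` if necessary, the segment from `x` to `z` avoids the origin
  obtain ⟨z, hz, hz0, hGz, hxz⟩ : ∃ z ∈ Submodule.span ℝ {x, y}, z ≠ 0 ∧
      0 ≤ z ⬝ᵥ G *ᵥ z ∧ 0 ≤ x ⬝ᵥ z := by
    have hy' : y ∈ Submodule.span ℝ {x, y} := Submodule.subset_span (by simp)
    rcases le_total 0 (x ⬝ᵥ y) with h | h
    · exact ⟨y, hy', hy, hGy, h⟩
    · exact ⟨-y, neg_mem hy', neg_ne_zero.mpr hy, by simpa [mulVec_neg] using hGy,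
        by simpa using h⟩
  set w : ℝ → m → ℝ := fun θ => (1 - θ) • x + θ • z
  obtain ⟨θ, hθ, hGw⟩ := intermediate_value_Icc zero_le_one
    (f := fun θ => w θ ⬝ᵥ G *ᵥ w θ) (by fun_prop) (by simpa [w] using ⟨hGx, hGz⟩)
  refine ⟨w θ, add_mem (Submodule.smul_mem _ _ (Submodule.subset_span (by simp)))
    (Submodule.smul_mem _ _ hz), ?_, hGw⟩
  intro hw0
  have hxx := dotProduct_self_pos hx
  have hzz := dotProduct_self_pos hz0
  have hww : w θ ⬝ᵥ w θ =
      (1 - θ) ^ 2 * (x ⬝ᵥ x) + 2 * (θ * (1 - θ)) * (x ⬝ᵥ z) + θ ^ 2 * (z ⬝ᵥ z) := by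
    simp only [w, add_dotProduct, dotProduct_add, smul_dotProduct, dotProduct_smul, smul_eq_mul,
      dotProduct_comm z x]
    ring
  rw [hw0, zero_dotProduct] at hww
  have hcross : 0 ≤ 2 * (θ * (1 - θ)) * (x ⬝ᵥ z) :=
    mul_nonneg (mul_nonneg zero_le_two (mul_nonneg hθ.1 (sub_nonneg.mpr hθ.2))) hxz
  have h1 : (1 - θ) ^ 2 * (x ⬝ᵥ x) = 0 := by nlinarith [sq_nonneg θ, sq_nonneg (1 - θ)]
  have h0 : θ ^ 2 * (z ⬝ᵥ z) = 0 := by nlinarith [sq_nonneg θ, sq_nonneg (1 - θ)]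
  simp [hxx.ne', hzz.ne', sub_eq_zero] at h1 h0
  simp [h0] at h1

end DotProduct

section Rayleigh

variable {m : Type*} [Fintype m]

variable (m) in
def unitSphere : Set (m → ℝ) := {x | x ⬝ᵥ x = 1}

lemma isCompact_unitSphere : IsCompact (unitSphere m) := by
  have hnorm (y : EuclideanSpace ℝ m) : ‖y‖ = 1 ↔ y.ofLp ⬝ᵥ y.ofLp = 1 := by
    rw [← sq_eq_sq₀ (norm_nonneg _) zero_le_one, one_pow, ← real_inner_self_eq_norm_sq,
      EuclideanSpace.inner_eq_star_dotProduct, star_trivial]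
  have h : unitSphere m = WithLp.ofLp '' Metric.sphere (0 : EuclideanSpace ℝ m) 1 := by
    ext x
    refine ⟨fun hx => ⟨WithLp.toLp 2 x, by rwa [mem_sphere_zero_iff_norm, hnorm], rfl⟩, ?_⟩
    rintro ⟨y, hy, rfl⟩
    rwa [mem_sphere_zero_iff_norm, hnorm] at hy
  rw [h]
  exact (isCompact_sphere _ _).image (PiLp.continuous_ofLp 2 _)

lemma dotProduct_mulVec_inv_sqrt_smul (M : Matrix m m ℝ) (x : m → ℝ) :
    (√(x ⬝ᵥ x))⁻¹ • x ⬝ᵥ M *ᵥ ((√(x ⬝ᵥ x))⁻¹ • x) = x ⬝ᵥ M *ᵥ x / (x ⬝ᵥ x) := by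
  simp only [mulVec_smul, smul_dotProduct, dotProduct_smul, smul_eq_mul, ← mul_assoc, ← sq,
    inv_pow, Real.sq_sqrt (dotProduct_self_nonneg x)]
  ring

lemma smul_mem_unitSphere {x : m → ℝ} (hx : x ≠ 0) :
    (√(x ⬝ᵥ x))⁻¹ • x ∈ unitSphere m := by
  classical
  have h := dotProduct_mulVec_inv_sqrt_smul 1 x
  rwa [one_mulVec, one_mulVec, div_self (dotProduct_self_pos hx).ne'] at h

lemma ne_zero_of_mem_unitSphere {x : m → ℝ} (hx : x ∈ unitSphere m) : x ≠ 0 := by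
  rintro rfl
  simp [unitSphere] at hx

lemma unitSphere_nonempty [Nonempty m] : (unitSphere m).Nonempty := by
  classical
  obtain ⟨i⟩ := ‹Nonempty m›
  exact ⟨Pi.single i 1, by simp [unitSphere]⟩

noncomputable def maxRayleigh (M : Matrix m m ℝ) : ℝ :=
  sSup ((fun x => x ⬝ᵥ M *ᵥ x) '' unitSphere m)

lemma continuous_maxRayleigh : Continuous (maxRayleigh (m := m)) :=
  isCompact_unitSphere.continuous_sSup (f := fun M x => x ⬝ᵥ M *ᵥ x) (by fun_prop)

lemma le_maxRayleigh (M : Matrix m m ℝ) {x : m → ℝ} (hx : x ∈ unitSphere m) :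
    x ⬝ᵥ M *ᵥ x ≤ maxRayleigh M :=
  le_csSup ((isCompact_unitSphere.image (by fun_prop)).bddAbove) ⟨x, hx, rfl⟩

lemma exists_mem_unitSphere_eq_maxRayleigh [Nonempty m] (M : Matrix m m ℝ) :
    ∃ x ∈ unitSphere m, x ⬝ᵥ M *ᵥ x = maxRayleigh M :=
  (isCompact_unitSphere.image (by fun_prop)).sSup_mem (unitSphere_nonempty.image _)

lemma dotProduct_mulVec_le_maxRayleigh_mul (M : Matrix m m ℝ) (x : m → ℝ) :
    x ⬝ᵥ M *ᵥ x ≤ maxRayleigh M * (x ⬝ᵥ x) := by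
  rcases eq_or_ne x 0 with rfl | hx
  · simp
  have h := le_maxRayleigh M (smul_mem_unitSphere hx)
  rwa [dotProduct_mulVec_inv_sqrt_smul, div_le_iff₀ (dotProduct_self_pos hx)] at h

lemma posSemidef_maxRayleigh_smul_one_sub [DecidableEq m] {M : Matrix m m ℝ} (hM : M.IsSymm) :
    (maxRayleigh M • 1 - M).PosSemidef := by
  refine posSemidef_of_isSymm ((isSymm_one.smul _).sub hM) fun x => ?_
  rw [sub_mulVec, smul_mulVec, one_mulVec, dotProduct_sub, dotProduct_smul, smul_eq_mul]
  linarith [dotProduct_mulVec_le_maxRayleigh_mul M x]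

lemma mulVec_eq_maxRayleigh_smul {M : Matrix m m ℝ} (hM : M.IsSymm) {x : m → ℝ}
    (hx : x ⬝ᵥ M *ᵥ x = maxRayleigh M * (x ⬝ᵥ x)) : M *ᵥ x = maxRayleigh M • x := by
  classical
  have h := ((posSemidef_maxRayleigh_smul_one_sub hM).dotProduct_mulVec_zero_iff x).mp (by
    rw [star_trivial, sub_mulVec, smul_mulVec, one_mulVec, dotProduct_sub, dotProduct_smul,
      smul_eq_mul, hx, sub_self])
  rw [sub_mulVec, smul_mulVec, one_mulVec, sub_eq_zero] at h
  exact h.symm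

lemma span_le_eigenspace_maxRayleigh [DecidableEq m] {M : Matrix m m ℝ} (hM : M.IsSymm)
    {s : Set (m → ℝ)} (hs : s ⊆ unitSphere m ∩ {x | x ⬝ᵥ M *ᵥ x = maxRayleigh M}) :
    Submodule.span ℝ s ≤ Module.End.eigenspace (toLin' M) (maxRayleigh M) := by
  refine Submodule.span_le.mpr fun x hx => ?_
  obtain ⟨hx₁, hxM⟩ := hs hx
  rw [SetLike.mem_coe, Module.End.mem_eigenspace_iff, toLin'_apply]
  exact mulVec_eq_maxRayleigh_smul hM (by rw [hxM, hx₁, mul_one])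

lemma negSemidef_of_maxRayleigh_nonpos {M : Matrix m m ℝ} (hM : M.IsSymm)
    (h : maxRayleigh M ≤ 0) : (-M).PosSemidef := by
  refine posSemidef_of_isSymm hM.neg fun x => ?_
  rw [neg_mulVec, dotProduct_neg, neg_nonneg]
  nlinarith [dotProduct_mulVec_le_maxRayleigh_mul M x, dotProduct_self_nonneg x]

end Rayleigh

section Pencil

variable {m : Type*} (C S T : Matrix m m ℝ)

noncomputable def petersenMatrix (ε : ℝ) : Matrix m m ℝ := C + ε • S + ε⁻¹ • T

lemma petersenMatrix_inv (ε : ℝ) : petersenMatrix C S T ε⁻¹ = petersenMatrix C T S ε := by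
  rw [petersenMatrix, petersenMatrix, inv_inv, add_right_comm]

lemma continuousAt_petersenMatrix {ε : ℝ} (hε : ε ≠ 0) :
    ContinuousAt (petersenMatrix C S T) ε := by
  unfold petersenMatrix
  fun_prop (disch := exact hε)

variable {C S T} in
lemma isSymm_petersenMatrix (hC : C.IsSymm) (hS : S.IsSymm) (hT : T.IsSymm) (ε : ℝ) :
    (petersenMatrix C S T ε).IsSymm :=
  (hC.add (hS.smul ε)).add (hT.smul ε⁻¹)

variable [Fintype m]

lemma dotProduct_petersenMatrix (ε : ℝ) (x : m → ℝ) :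
    x ⬝ᵥ petersenMatrix C S T ε *ᵥ x =
      x ⬝ᵥ C *ᵥ x + ε * (x ⬝ᵥ S *ᵥ x) + ε⁻¹ * (x ⬝ᵥ T *ᵥ x) := by
  simp only [petersenMatrix, add_mulVec, smul_mulVec, dotProduct_add, dotProduct_smul, smul_eq_mul]

lemma dotProduct_petersenMatrix_sub {ε ε' : ℝ} (hε : ε ≠ 0) (hε' : ε' ≠ 0) (x : m → ℝ) :
    x ⬝ᵥ petersenMatrix C S T ε' *ᵥ x - x ⬝ᵥ petersenMatrix C S T ε *ᵥ x =
      (ε' - ε) * (x ⬝ᵥ S *ᵥ x - (ε' * ε)⁻¹ * (x ⬝ᵥ T *ᵥ x)) := by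
  rw [dotProduct_petersenMatrix, dotProduct_petersenMatrix]
  field_simp
  ring

variable {C S T}

lemma le_maxRayleigh_petersenMatrix (hT : T.PosSemidef) {x : m → ℝ} (hx : x ∈ unitSphere m)
    {ε : ℝ} (hε : 0 ≤ ε) :
    x ⬝ᵥ C *ᵥ x + ε * (x ⬝ᵥ S *ᵥ x) ≤ maxRayleigh (petersenMatrix C S T ε) := by
  have hTx : 0 ≤ x ⬝ᵥ T *ᵥ x := by simpa using hT.dotProduct_mulVec_nonneg x
  have := le_maxRayleigh (petersenMatrix C S T ε) hx
  rw [dotProduct_petersenMatrix] at this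
  nlinarith [inv_nonneg.mpr hε]

lemma exists_mem_unitSphere_dotProduct_mulVec_pos (hS : S.PosSemidef) (hS0 : S ≠ 0) :
    ∃ x ∈ unitSphere m, 0 < x ⬝ᵥ S *ᵥ x := by
  classical
  obtain ⟨x, hx⟩ : ∃ x, S *ᵥ x ≠ 0 := by
    by_contra! h
    exact hS0 (ext_of_mulVec_single fun i => by rw [h, zero_mulVec])
  have hxS : 0 < x ⬝ᵥ S *ᵥ x := by
    refine (by simpa using hS.dotProduct_mulVec_nonneg x : 0 ≤ x ⬝ᵥ S *ᵥ x).lt_of_ne' ?_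
    simpa using (hS.dotProduct_mulVec_zero_iff x).not.mpr hx
  have hx0 : x ≠ 0 := by rintro rfl; simp at hx
  refine ⟨_, smul_mem_unitSphere hx0, ?_⟩
  rw [dotProduct_mulVec_inv_sqrt_smul]
  exact div_pos hxS (dotProduct_self_pos hx0)

lemma tendsto_maxRayleigh_petersenMatrix_atTop (hS : S.PosSemidef) (hS0 : S ≠ 0)
    (hT : T.PosSemidef) :
    Tendsto (fun ε => maxRayleigh (petersenMatrix C S T ε)) atTop atTop := by
  obtain ⟨x, hx, hxS⟩ := exists_mem_unitSphere_dotProduct_mulVec_pos hS hS0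
  refine tendsto_atTop_mono' _ ?_
    (tendsto_atTop_add_const_left _ (x ⬝ᵥ C *ᵥ x) (tendsto_id.atTop_mul_const hxS))
  filter_upwards [eventually_ge_atTop 0] with ε hε
  exact le_maxRayleigh_petersenMatrix hT hx hε

lemma exists_isMinOn_maxRayleigh_petersenMatrix (hS : S.PosSemidef) (hS0 : S ≠ 0)
    (hT : T.PosSemidef) (hT0 : T ≠ 0) :
    ∃ e > 0, IsMinOn (fun ε => maxRayleigh (petersenMatrix C S T ε)) (Set.Ioi 0) e := by
  have hcont : Continuous fun t => maxRayleigh (petersenMatrix C S T (Real.exp t)) :=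
    continuous_maxRayleigh.comp (by
      unfold petersenMatrix
      fun_prop (disch := exact fun t => (Real.exp_pos t).ne'))
  have hatBot :
      Tendsto (fun t => maxRayleigh (petersenMatrix C S T (Real.exp t))) atBot atTop := by
    have := (tendsto_maxRayleigh_petersenMatrix_atTop (C := C) hT hT0 hS).comp
      (Real.tendsto_exp_atTop.comp tendsto_neg_atBot_atTop)
    refine this.congr fun t => ?_
    simp [← petersenMatrix_inv C S T, Real.exp_neg]
  obtain ⟨t, ht⟩ := hcont.exists_forall_le (by
    rw [cocompact_eq_atBot_atTop, tendsto_sup]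
    exact ⟨hatBot,
      (tendsto_maxRayleigh_petersenMatrix_atTop hS hS0 hT).comp Real.tendsto_exp_atTop⟩)
  refine ⟨Real.exp t, Real.exp_pos t, fun ε (hε : 0 < ε) => ?_⟩
  simpa [Real.exp_log hε] using ht (Real.log ε)

lemma exists_maximizer_dotProduct_le_of_forall_gt [Nonempty m] {e : ℝ} (he : 0 < e)
    (hmin : ∀ ε > e,
      maxRayleigh (petersenMatrix C S T e) ≤ maxRayleigh (petersenMatrix C S T ε)) :
    ∃ x ∈ unitSphere m,
      x ⬝ᵥ petersenMatrix C S T e *ᵥ x = maxRayleigh (petersenMatrix C S T e) ∧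
        x ⬝ᵥ T *ᵥ x ≤ e ^ 2 * (x ⬝ᵥ S *ᵥ x) := by
  set ε : ℕ → ℝ := fun k => e + ((k : ℝ) + 1)⁻¹
  have hεe (k : ℕ) : e < ε k := lt_add_of_pos_right e (by positivity)
  have hε : Tendsto ε atTop (𝓝 e) := by
    simpa using tendsto_one_div_add_atTop_nhds_zero_nat.const_add e
  choose y hy hyP using fun k =>
    exists_mem_unitSphere_eq_maxRayleigh (petersenMatrix C S T (ε k))
  have hyT (k : ℕ) : y k ⬝ᵥ T *ᵥ y k ≤ ε k * e * (y k ⬝ᵥ S *ᵥ y k) := by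
    have hle := le_maxRayleigh (petersenMatrix C S T e) (hy k)
    have hdiff := dotProduct_petersenMatrix_sub C S T he.ne' (he.trans (hεe k)).ne' (y k)
    have hpos : 0 ≤ (ε k - e) * (y k ⬝ᵥ S *ᵥ y k - (ε k * e)⁻¹ * (y k ⬝ᵥ T *ᵥ y k)) := by
      linarith [hmin _ (hεe k), hyP k]
    have := nonneg_of_mul_nonneg_right hpos (sub_pos.mpr (hεe k))
    rwa [sub_nonneg, inv_mul_le_iff₀ (by nlinarith [hεe k])] at this
  obtain ⟨x, hx, φ, hφ, hlim⟩ := isCompact_unitSphere.tendsto_subseq hy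
  have hεφ : Tendsto (ε ∘ φ) atTop (𝓝 e) := hε.comp hφ.tendsto_atTop
  have hPφ :
      Tendsto (fun j => petersenMatrix C S T (ε (φ j))) atTop (𝓝 (petersenMatrix C S T e)) :=
    (continuousAt_petersenMatrix C S T he.ne').tendsto.comp hεφ
  refine ⟨x, hx, tendsto_nhds_unique ?_ ((continuous_maxRayleigh.tendsto _).comp hPφ), ?_⟩
  · refine Tendsto.congr (fun j => hyP (φ j)) ?_
    have hquad : Continuous fun p : Matrix m m ℝ × (m → ℝ) => p.2 ⬝ᵥ p.1 *ᵥ p.2 := by fun_prop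
    exact (hquad.tendsto _).comp (hPφ.prodMk_nhds hlim)
  · have hquad (M : Matrix m m ℝ) : Tendsto (fun j => y (φ j) ⬝ᵥ M *ᵥ y (φ j)) atTop
        (𝓝 (x ⬝ᵥ M *ᵥ x)) :=
      ((by fun_prop : Continuous fun z : m → ℝ => z ⬝ᵥ M *ᵥ z).tendsto x).comp hlim
    rw [sq]
    exact le_of_tendsto_of_tendsto' (hquad T) (((hεφ.mul_const e).mul (hquad S)))
      fun j => hyT (φ j)

lemma exists_maximizer_le_dotProduct_of_forall_lt [Nonempty m] {e : ℝ} (he : 0 < e)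
    (hmin : ∀ ε > 0, ε < e →
      maxRayleigh (petersenMatrix C S T e) ≤ maxRayleigh (petersenMatrix C S T ε)) :
    ∃ x ∈ unitSphere m,
      x ⬝ᵥ petersenMatrix C S T e *ᵥ x = maxRayleigh (petersenMatrix C S T e) ∧
        e ^ 2 * (x ⬝ᵥ S *ᵥ x) ≤ x ⬝ᵥ T *ᵥ x := by
  obtain ⟨x, hx, hxP, hxS⟩ := exists_maximizer_dotProduct_le_of_forall_gt (C := C) (S := T)
    (T := S) (inv_pos.mpr he) fun ε hε => by
      rw [petersenMatrix_inv C T S e, ← petersenMatrix_inv C S T ε]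
      exact hmin _ (inv_pos.mpr ((inv_pos.mpr he).trans hε)) (inv_lt_of_inv_lt₀ he hε)
  rw [petersenMatrix_inv C T S e] at hxP
  rw [inv_pow, ← div_eq_inv_mul, le_div_iff₀ (by positivity)] at hxS
  exact ⟨x, hx, hxP, by linarith⟩

theorem exists_pos_negSemidef_petersenMatrix (hC : C.IsSymm) (hS : S.PosSemidef)
    (hT : T.PosSemidef) (hS0 : S ≠ 0) (hT0 : T ≠ 0)
    (h : ∀ x t, 0 < t → x ⬝ᵥ T *ᵥ x = t ^ 2 * (x ⬝ᵥ S *ᵥ x) →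
      x ⬝ᵥ petersenMatrix C S T t *ᵥ x ≤ 0) :
    ∃ ε > 0, (-petersenMatrix C S T ε).PosSemidef := by
  classical
  have : Nonempty m := by
    by_contra hm
    exact hS0 (ext fun i => (not_nonempty_iff.mp hm).elim i)
  obtain ⟨e, he, hmin⟩ := exists_isMinOn_maxRayleigh_petersenMatrix hS hS0 hT hT0
  have hPsymm := isSymm_petersenMatrix hC (isHermitian_iff_isSymm.mp hS.1)
    (isHermitian_iff_isSymm.mp hT.1) e
  refine ⟨e, he, negSemidef_of_maxRayleigh_nonpos hPsymm ?_⟩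
  by_contra! hpos
  obtain ⟨x₁, hx₁, hx₁P, hx₁T⟩ :=
    exists_maximizer_le_dotProduct_of_forall_lt he fun ε hε _ => hmin hε
  obtain ⟨x₂, hx₂, hx₂P, hx₂T⟩ :=
    exists_maximizer_dotProduct_le_of_forall_gt he fun ε hε => hmin (he.trans hε)
  have hG (x : m → ℝ) :
      x ⬝ᵥ (e ^ 2 • S - T) *ᵥ x = e ^ 2 * (x ⬝ᵥ S *ᵥ x) - x ⬝ᵥ T *ᵥ x := by
    rw [sub_mulVec, smul_mulVec, dotProduct_sub, dotProduct_smul, smul_eq_mul]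
  obtain ⟨w, hw, hw0, hGw⟩ := exists_ne_zero_dotProduct_mulVec_eq_zero (e ^ 2 • S - T)
    (ne_zero_of_mem_unitSphere hx₁) (ne_zero_of_mem_unitSphere hx₂)
    (by linarith [hG x₁]) (by linarith [hG x₂])
  have hPw := span_le_eigenspace_maxRayleigh hPsymm (Set.insert_subset_iff.mpr
    ⟨⟨hx₁, hx₁P⟩, Set.singleton_subset_iff.mpr ⟨hx₂, hx₂P⟩⟩) hw
  rw [Module.End.mem_eigenspace_iff, toLin'_apply] at hPw
  have hwP := h w e he (by linarith [hG w])
  rw [hPw, dotProduct_smul, smul_eq_mul] at hwP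
  nlinarith [dotProduct_self_pos hw0]

end Pencil

section Perturbation

variable {m k l : Type*} [Fintype m] [Fintype k] [Fintype l]
  {C : Matrix m m ℝ} {B : Matrix m k ℝ} {A : Matrix l m ℝ}

lemma dotProduct_perturbation_mulVec (Δ : Matrix k l ℝ) (x : m → ℝ) :
    x ⬝ᵥ (C + B * Δ * A + Aᵀ * Δᵀ * Bᵀ) *ᵥ x =
      x ⬝ᵥ C *ᵥ x + 2 * (Bᵀ *ᵥ x ⬝ᵥ Δ *ᵥ A *ᵥ x) := by
  have h₁ : x ⬝ᵥ (B * Δ * A) *ᵥ x = Bᵀ *ᵥ x ⬝ᵥ Δ *ᵥ A *ᵥ x := by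
    rw [Matrix.mul_assoc, dotProduct_mul_mulVec, mulVec_mulVec]
  have h₂ : x ⬝ᵥ (Aᵀ * Δᵀ * Bᵀ) *ᵥ x = Bᵀ *ᵥ x ⬝ᵥ Δ *ᵥ A *ᵥ x := by
    rw [dotProduct_mul_mulVec, transpose_mul, transpose_transpose, transpose_transpose,
      ← mulVec_mulVec, dotProduct_comm]
  rw [add_mulVec, add_mulVec, dotProduct_add, dotProduct_add, h₁, h₂]
  ring

variable [DecidableEq l]

lemma negSemidef_perturbation_of_negSemidef_petersenMatrix (hC : C.IsSymm) {ε : ℝ}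
    (hε : 0 < ε)
    (h : (-petersenMatrix C (B * Bᵀ) (Aᵀ * A) ε).PosSemidef) {Δ : Matrix k l ℝ}
    (hΔ : (1 - Δᵀ * Δ).PosSemidef) : (-(C + B * Δ * A + Aᵀ * Δᵀ * Bᵀ)).PosSemidef := by
  refine posSemidef_of_isSymm ?_ fun x => ?_
  · refine IsSymm.neg ?_
    simp only [IsSymm, transpose_add, transpose_mul, transpose_transpose, hC.eq, Matrix.mul_assoc]
    abel
  have hP := h.dotProduct_mulVec_nonneg x
  rw [star_trivial, neg_mulVec, dotProduct_neg, dotProduct_petersenMatrix, dotProduct_mul_mulVec,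
    dotProduct_mul_mulVec, transpose_transpose] at hP
  rw [neg_mulVec, dotProduct_neg, neg_nonneg, dotProduct_perturbation_mulVec]
  have := two_mul_dotProduct_le (Bᵀ *ᵥ x) (Δ *ᵥ A *ᵥ x) hε
  have := (posSemidef_one_sub_transpose_mul_self_iff Δ).mp hΔ (A *ᵥ x)
  nlinarith [inv_pos.mpr hε]

lemma dotProduct_petersenMatrix_nonpos_of_forall_contraction
    (h : ∀ Δ : Matrix k l ℝ, (1 - Δᵀ * Δ).PosSemidef →
      (-(C + B * Δ * A + Aᵀ * Δᵀ * Bᵀ)).PosSemidef)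
    (x : m → ℝ) {t : ℝ} (ht : 0 < t)
    (hx : x ⬝ᵥ (Aᵀ * A) *ᵥ x = t ^ 2 * (x ⬝ᵥ (B * Bᵀ) *ᵥ x)) :
    x ⬝ᵥ petersenMatrix C (B * Bᵀ) (Aᵀ * A) t *ᵥ x ≤ 0 := by
  rw [dotProduct_mul_mulVec, dotProduct_mul_mulVec, transpose_transpose] at hx
  obtain ⟨Δ, hΔ, hΔx⟩ := exists_contraction_mulVec_eq (u := t • Bᵀ *ᵥ x) (v := A *ᵥ x) (by
    rw [hx, smul_dotProduct, dotProduct_smul, smul_eq_mul, smul_eq_mul, ← mul_assoc, sq])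
  have hneg := (h Δ hΔ).dotProduct_mulVec_nonneg x
  rw [star_trivial, neg_mulVec, dotProduct_neg, neg_nonneg, dotProduct_perturbation_mulVec, hΔx,
    dotProduct_smul, smul_eq_mul] at hneg
  rw [dotProduct_petersenMatrix, dotProduct_mul_mulVec, dotProduct_mul_mulVec,
    transpose_transpose, hx, ← mul_assoc, inv_mul_eq_div, sq, mul_div_cancel_left₀ _ ht.ne']
  linarith

end Perturbation

end Matrix

/-- Petersen's lemma (static form). For `C` symmetric and nonzero `B`, `A`:
`C + BΔA + AᵀΔᵀBᵀ ⪯ 0` for all `Δ` with `ΔᵀΔ ⪯ I` iff there exists `ε > 0` with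
`C + ε B Bᵀ + ε⁻¹ Aᵀ A ⪯ 0`. -/
theorem petersen_lemma (n p q : ℕ) (C : Matrix (Fin n) (Fin n) ℝ) (hC : C.IsSymm)
    (B : Matrix (Fin n) (Fin p) ℝ) (hB : B ≠ 0)
    (A : Matrix (Fin q) (Fin n) ℝ) (hA : A ≠ 0) :
    (∀ Δ : Matrix (Fin p) (Fin q) ℝ,
        ((1 : Matrix (Fin q) (Fin q) ℝ) - Δᵀ * Δ).PosSemidef →
        (-(C + B * Δ * A + Aᵀ * Δᵀ * Bᵀ)).PosSemidef) ↔
      ∃ ε : ℝ, 0 < ε ∧ (-(C + ε • (B * Bᵀ) + ε⁻¹ • (Aᵀ * A))).PosSemidef := by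
  constructor
  · intro h
    exact exists_pos_negSemidef_petersenMatrix hC
      (by simpa using posSemidef_self_mul_conjTranspose B)
      (by simpa using posSemidef_conjTranspose_mul_self A)
      (by simpa using self_mul_conjTranspose_eq_zero.not.mpr hB)
      (by simpa using conjTranspose_mul_self_eq_zero.not.mpr hA)
      fun x t ht hx => dotProduct_petersenMatrix_nonpos_of_forall_contraction h x ht hx
  · rintro ⟨ε, hε, h⟩ Δ hΔ
    exact negSemidef_perturbation_of_negSemidef_petersenMatrix hC hε h hΔ
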